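/- arXiv:cs/0508093 — 3 statements merged into one kernel-verified Lean document; each statement's English description precedes it below -/
import Mathlib

section
/- Fix a constant k > 0 and a function L : ℕ → ℕ with 1 ≤ L(M) ≤ M for all M and L(M) → ∞ as M → ∞. For each M, suppose on a probability space there are mutually independent real random variables Y₁,…,Y_{L(M)}, each Gaussian with mean √(k·log M / L(M)) and variance 1, and W₁,…,W_{M−L(M)}, each Gaussian with mean 0 and variance 1. Let S₁ = max_{1≤i≤M−L(M)} W_i and let B_{L(M)} = min_{1≤i≤L(M)} Y_i. If L(M)/M → 0 as M → ∞, then P[S₁ > B_{L(M)}] → 1 as M → ∞. -/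
/-!
Use the common mean `t = √(k log M / L)` of the `Yⱼ` as a threshold. If `min Yⱼ < max Wᵢ` fails,
then either every `Yⱼ` exceeds `t`, which by independence and symmetry has probability
`2^(-L) → 0`, or every `Wᵢ` is at most `t`, which has probability
`Φ(t)^(M-L) ≤ exp (-(M - L) (1 - Φ(t)))`. Since `L → ∞`, eventually `t² ≤ (log M) / 2`, and the
tail bound `1 - Φ(t) ≥ e^(-t²-1) / √(2π)` together with `M - L ≥ M / 2` (from `L / M → 0`)
gives `(M - L) (1 - Φ(t)) ≳ √M → ∞`.
-/

open MeasureTheory ProbabilityTheory Filter Set Real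
open scoped ENNReal NNReal Topology

lemma gaussianReal_Ioi_mean (μ : ℝ) {v : ℝ≥0} (hv : v ≠ 0) :
    gaussianReal μ v (Ioi μ) = 2⁻¹ := by
  have := nullSingletonClass_gaussianReal (μ := μ) hv
  have hreflect : gaussianReal μ v (Iio μ) = gaussianReal μ v (Ioi μ) := by
    have hmap : (gaussianReal μ v).map (2 * μ - ·) = gaussianReal μ v := by
      rw [gaussianReal_map_const_sub]; ring_nf
    conv_lhs => rw [← hmap]
    rw [Measure.map_apply (by fun_prop) measurableSet_Iio]
    congr 1
    ext x
    simp only [mem_preimage, mem_Iio, mem_Ioi]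
    constructor <;> intro h <;> linarith
  have hsum : gaussianReal μ v (Iio μ) + gaussianReal μ v (Ioi μ) = 1 := by
    rw [measure_congr Iio_ae_eq_Iic, ← compl_Iic, measure_add_measure_compl measurableSet_Iic,
      measure_univ]
  rw [hreflect, ← mul_two] at hsum
  exact ENNReal.eq_inv_of_mul_eq_one_left hsum

lemma ofReal_exp_neg_sq_add_one_le_gaussianReal_Ioi {t : ℝ} (ht : 0 ≤ t) :
    ENNReal.ofReal (exp (-(t ^ 2 + 1)) / √(2 * π)) ≤ gaussianReal 0 1 (Ioi t) := by
  rw [gaussianReal_apply 0 one_ne_zero]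
  calc ENNReal.ofReal (exp (-(t ^ 2 + 1)) / √(2 * π))
      = ∫⁻ _ in Ioc t (t + 1), ENNReal.ofReal (exp (-(t ^ 2 + 1)) / √(2 * π)) := by
        simp [Real.volume_Ioc]
    _ ≤ ∫⁻ x in Ioc t (t + 1), gaussianPDF 0 1 x := by
        refine setLIntegral_mono' measurableSet_Ioc fun x ⟨htx, hxt⟩ ↦ ?_
        rw [gaussianPDF, gaussianPDFReal]
        refine ENNReal.ofReal_le_ofReal ?_
        have : x ^ 2 / 2 ≤ t ^ 2 + 1 := by nlinarith [sq_nonneg (t - 1)]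
        simp only [NNReal.coe_one, mul_one, sub_zero]
        rw [div_eq_inv_mul]
        gcongr
        linarith
    _ ≤ ∫⁻ x in Ioi t, gaussianPDF 0 1 x := lintegral_mono_set Ioc_subset_Ioi_self

lemma exp_neg_sq_add_one_le_gaussianReal_real_Ioi {t : ℝ} (ht : 0 ≤ t) :
    exp (-(t ^ 2 + 1)) / √(2 * π) ≤ (gaussianReal 0 1).real (Ioi t) :=
  (ENNReal.ofReal_le_iff_le_toReal (measure_ne_top _ _)).mp
    (ofReal_exp_neg_sq_add_one_le_gaussianReal_Ioi ht)

lemma ProbabilityTheory.iIndepFun.measure_iInter_preimage_eq_pow {ι Ω β : Type*} [Fintype ι]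
    {mΩ : MeasurableSpace Ω} [MeasurableSpace β] {μ : Measure Ω} {X : ι → Ω → β}
    {ν : Measure β} [NeZero ν] (hX : iIndepFun X μ) (hXν : ∀ i, μ.map (X i) = ν)
    {s : Set β} (hs : MeasurableSet s) :
    μ (⋂ i, X i ⁻¹' s) = ν s ^ Fintype.card ι := by
  have hmeas i : AEMeasurable (X i) μ :=
    aemeasurable_of_map_neZero (by rw [hXν i]; infer_instance)
  have := hX.measure_inter_preimage_eq_mul Finset.univ (sets := fun _ ↦ s) fun _ _ ↦ hs
  simp only [Finset.mem_univ, iInter_true] at this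
  simp [this, ← Measure.map_apply_of_aemeasurable (hmeas _) hs, hXν]

lemma iInf_lt_iSup_of_exists_le_of_exists_lt {ι κ β : Type*} [Finite ι] [Finite κ]
    [ConditionallyCompleteLinearOrder β] {y : ι → β} {w : κ → β} {t : β}
    (hy : ∃ j, y j ≤ t) (hw : ∃ i, t < w i) : ⨅ j, y j < ⨆ i, w i := by
  obtain ⟨j, hj⟩ := hy
  obtain ⟨i, hi⟩ := hw
  calc ⨅ j, y j ≤ t := (ciInf_le (finite_range y).bddBelow j).trans hj
    _ < w i := hi
    _ ≤ ⨆ i, w i := le_ciSup (finite_range w).bddAbove i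

lemma one_le_measure_iInf_lt_iSup_add {ι κ Ω β : Type*} [Finite ι] [Finite κ]
    [ConditionallyCompleteLinearOrder β] {mΩ : MeasurableSpace Ω} (μ : Measure Ω)
    [IsProbabilityMeasure μ] (Y : ι → Ω → β) (W : κ → Ω → β) (t : β) :
    1 ≤ μ {ω | ⨅ j, Y j ω < ⨆ i, W i ω}
      + (μ (⋂ j, Y j ⁻¹' Ioi t) + μ (⋂ i, W i ⁻¹' Iic t)) := by
  have hcover : univ ⊆ {ω | ⨅ j, Y j ω < ⨆ i, W i ω}
      ∪ ((⋂ j, Y j ⁻¹' Ioi t) ∪ ⋂ i, W i ⁻¹' Iic t) := by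
    intro ω _
    by_contra h
    simp only [mem_union, mem_ofPred_eq, mem_iInter, mem_preimage, mem_Ioi, mem_Iic,
      not_or, not_forall, not_lt, not_le] at h
    exact h.1.not_gt (iInf_lt_iSup_of_exists_le_of_exists_lt h.2.1 h.2.2)
  calc 1 = μ univ := measure_univ.symm
    _ ≤ _ := measure_mono hcover
    _ ≤ _ := (measure_union_le _ _).trans (add_le_add_right (measure_union_le _ _) _)

lemma ENNReal.tendsto_nhds_one_of_one_le_add {α : Type*} {l : Filter α} {f g : α → ℝ≥0∞}
    (hf : ∀ a, f a ≤ 1) (hfg : ∀ a, 1 ≤ f a + g a) (hg : Tendsto g l (𝓝 0)) :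
    Tendsto f l (𝓝 1) := by
  have hlow : Tendsto (fun a ↦ 1 - g a) l (𝓝 1) := by
    simpa using ENNReal.Tendsto.sub tendsto_const_nhds hg (.inl ENNReal.one_ne_top)
  exact tendsto_of_tendsto_of_tendsto_of_le_of_le hlow tendsto_const_nhds
    (fun a ↦ tsub_le_iff_right.mpr (hfg a)) hf

lemma tendsto_one_sub_pow_nhds_zero {α : Type*} {l : Filter α} {r : α → ℝ} {n : α → ℕ}
    (hr : ∀ a, r a ≤ 1) (hnr : Tendsto (fun a ↦ n a * r a) l atTop) :
    Tendsto (fun a ↦ (1 - r a) ^ n a) l (𝓝 0) := by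
  have hle a : (1 - r a) ^ n a ≤ exp (-(n a * r a)) := by
    calc (1 - r a) ^ n a ≤ exp (-r a) ^ n a :=
          pow_le_pow_left₀ (sub_nonneg.mpr (hr a)) (one_sub_le_exp_neg _) _
      _ = exp (-(n a * r a)) := by rw [← exp_nat_mul]; ring_nf
  exact tendsto_of_tendsto_of_tendsto_of_le_of_le tendsto_const_nhds
    (tendsto_exp_atBot.comp (tendsto_neg_atTop_atBot.comp hnr))
    (fun a ↦ pow_nonneg (sub_nonneg.mpr (hr a)) _) hle

lemma tendsto_measure_compl_pow_nhds_zero {α β : Type*} [MeasurableSpace β] {l : Filter α}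
    (ν : Measure β) [IsProbabilityMeasure ν] {s : α → Set β} (hs : ∀ a, MeasurableSet (s a))
    {n : α → ℕ} (hns : Tendsto (fun a ↦ n a * ν.real (s a)) l atTop) :
    Tendsto (fun a ↦ ν (s a)ᶜ ^ n a) l (𝓝 0) := by
  have h a : ν (s a)ᶜ ^ n a = ENNReal.ofReal ((1 - ν.real (s a)) ^ n a) := by
    rw [← probReal_compl_eq_one_sub (hs a), ENNReal.ofReal_pow measureReal_nonneg,
      ofReal_measureReal]
  simp_rw [h]
  simpa using ENNReal.tendsto_ofReal
    (tendsto_one_sub_pow_nhds_zero (fun a ↦ measureReal_le_one) hns)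

lemma eventually_div_two_le_natCast_sub {L : ℕ → ℕ}
    (hL : Tendsto (fun M ↦ (L M : ℝ) / M) atTop (𝓝 0)) :
    ∀ᶠ M : ℕ in atTop, (M : ℝ) / 2 ≤ (M - L M : ℕ) := by
  filter_upwards [eventually_gt_atTop 0, hL.eventually (eventually_le_nhds one_half_pos)]
    with M hM hLM
  rw [div_le_iff₀ (by exact_mod_cast hM)] at hLM
  have : L M ≤ M := by exact_mod_cast (by linarith : (L M : ℝ) ≤ M)
  rw [Nat.cast_sub this]
  linarith

lemma eventually_mul_log_div_le_log_div_two (k : ℝ) {L : ℕ → ℕ}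
    (hL : Tendsto (fun M ↦ (L M : ℝ)) atTop atTop) :
    ∀ᶠ M : ℕ in atTop, k * log M / L M ≤ log M / 2 := by
  filter_upwards [hL.eventually_ge_atTop (2 * k), hL.eventually_gt_atTop 0] with M hk hpos
  rw [div_le_div_iff₀ hpos two_pos]
  nlinarith [log_natCast_nonneg M]

lemma tendsto_natCast_mul_gaussianReal_real_Ioi_atTop {n : ℕ → ℕ} {t : ℕ → ℝ}
    (ht0 : ∀ M, 0 ≤ t M) (ht : ∀ᶠ M : ℕ in atTop, t M ^ 2 ≤ log M / 2)
    (hn : ∀ᶠ M : ℕ in atTop, (M : ℝ) / 2 ≤ n M) :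
    Tendsto (fun M ↦ n M * (gaussianReal 0 1).real (Ioi (t M))) atTop atTop := by
  set c := exp (-1) / (2 * √(2 * π))
  have hlow : ∀ᶠ M : ℕ in atTop,
      c * exp (log M / 2) ≤ n M * (gaussianReal 0 1).real (Ioi (t M)) := by
    filter_upwards [ht, hn, eventually_gt_atTop 0] with M htM hnM hM
    have hsqrt : (M : ℝ) * exp (-(log M / 2)) = exp (log M / 2) := by
      nth_rw 1 [← exp_log (by exact_mod_cast hM : (0 : ℝ) < M)]
      rw [← exp_add]
      ring_nf
    calc c * exp (log M / 2) = M / 2 * (exp (-(log M / 2 + 1)) / √(2 * π)) := by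
          rw [← hsqrt, neg_add, exp_add]
          ring
      _ ≤ n M * (exp (-(t M ^ 2 + 1)) / √(2 * π)) := by gcongr
      _ ≤ n M * (gaussianReal 0 1).real (Ioi (t M)) := by
          gcongr
          exact exp_neg_sq_add_one_le_gaussianReal_real_Ioi (ht0 M)
  refine tendsto_atTop_mono' atTop hlow (Tendsto.const_mul_atTop (by positivity) ?_)
  exact tendsto_exp_atTop.comp
    ((tendsto_log_atTop.comp tendsto_natCast_atTop_atTop).atTop_div_const two_pos)

theorem ml_sync_misses_a_path_general
    (k : ℝ)
    (L : ℕ → ℕ)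
    (hLinf : Tendsto (fun M => (L M : ℝ)) atTop atTop)
    (hLlin : Tendsto (fun M => (L M : ℝ) / M) atTop (nhds 0))
    (Ω : ℕ → Type) (mΩ : ∀ M, MeasurableSpace (Ω M))
    (P : ∀ M, Measure (Ω M))
    (Y : ∀ M, Fin (L M) → Ω M → ℝ) (W : ∀ M, Fin (M - L M) → Ω M → ℝ)
    (hindep : ∀ M, iIndepFun
      (Sum.elim (Y M) (W M) : Fin (L M) ⊕ Fin (M - L M) → Ω M → ℝ) (P M))
    (hY : ∀ M i, Measure.map (Y M i) (P M)
      = gaussianReal (Real.sqrt (k * Real.log M / L M)) 1)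
    (hW : ∀ M i, Measure.map (W M i) (P M) = gaussianReal 0 1) :
    Tendsto (fun M => P M {ω | (⨅ j, Y M j ω) < ⨆ i, W M i ω}) atTop (nhds 1) := by
  have := fun M ↦ (hindep M).isProbabilityMeasure
  set t := fun M : ℕ ↦ √(k * log M / L M)
  refine ENNReal.tendsto_nhds_one_of_one_le_add (fun M ↦ prob_le_one)
    (fun M ↦ one_le_measure_iInf_lt_iSup_add (P M) (Y M) (W M) (t M)) ?_
  rw [← add_zero 0]
  refine Tendsto.add ?_ ?_
  · have hsignal M : P M (⋂ j, Y M j ⁻¹' Ioi (t M)) = 2⁻¹ ^ L M := by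
      have hYind : iIndepFun (Y M) (P M) := (hindep M).precomp (g := Sum.inl) Sum.inl_injective
      rw [hYind.measure_iInter_preimage_eq_pow (hY M) measurableSet_Ioi,
        gaussianReal_Ioi_mean _ one_ne_zero, Fintype.card_fin]
    simp_rw [hsignal]
    exact (ENNReal.tendsto_pow_atTop_nhds_zero_of_lt_one (by norm_num)).comp
      (tendsto_natCast_atTop_iff.mp hLinf)
  · have hnoise M :
        P M (⋂ i, W M i ⁻¹' Iic (t M)) = gaussianReal 0 1 (Ioi (t M))ᶜ ^ (M - L M) := by
      have hWind : iIndepFun (W M) (P M) := (hindep M).precomp (g := Sum.inr) Sum.inr_injective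
      rw [hWind.measure_iInter_preimage_eq_pow (hW M) measurableSet_Iic, compl_Ioi,
        Fintype.card_fin]
    simp_rw [hnoise]
    refine tendsto_measure_compl_pow_nhds_zero _ (fun _ ↦ measurableSet_Ioi) ?_
    refine tendsto_natCast_mul_gaussianReal_real_Ioi_atTop (fun M ↦ sqrt_nonneg _) ?_
      (eventually_div_two_le_natCast_sub hLlin)
    filter_upwards [eventually_mul_log_div_le_log_div_two k hLinf] with M hM
    exact (le_sqrt (sqrt_nonneg _) (div_nonneg (log_natCast_nonneg M) zero_le_two)).mp
      (sqrt_le_sqrt hM)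

/-- Part (b) of the main theorem: if `L M / M → 0`, then the probability
that the largest noise variable `S₁ = max_i W i` exceeds the smallest signal variable
`B_{L M} = min_j Y j` tends to `1` as `M → ∞`. -/
theorem ml_sync_misses_a_path
    (k : ℝ) (hk : 0 < k)
    (L : ℕ → ℕ) (hL1 : ∀ M, 1 ≤ L M) (hLM : ∀ M, L M ≤ M)
    (hLinf : Tendsto (fun M => (L M : ℝ)) atTop atTop)
    (hLlin : Tendsto (fun M => (L M : ℝ) / M) atTop (nhds 0))
    (Ω : ℕ → Type) (mΩ : ∀ M, MeasurableSpace (Ω M))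
    (P : ∀ M, Measure (Ω M)) (hP : ∀ M, IsProbabilityMeasure (P M))
    (Y : ∀ M, Fin (L M) → Ω M → ℝ) (W : ∀ M, Fin (M - L M) → Ω M → ℝ)
    (hindep : ∀ M, iIndepFun
      (Sum.elim (Y M) (W M) : Fin (L M) ⊕ Fin (M - L M) → Ω M → ℝ) (P M))
    (hY : ∀ M i, Measure.map (Y M i) (P M)
      = gaussianReal (Real.sqrt (k * Real.log M / L M)) 1)
    (hW : ∀ M i, Measure.map (W M i) (P M) = gaussianReal 0 1) :
    Tendsto (fun M => P M {ω | (⨅ j, Y M j ω) < ⨆ i, W M i ω}) atTop (nhds 1) :=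
  ml_sync_misses_a_path_general k L hLinf hLlin Ω mΩ P Y W hindep hY hW
end

section
/- Fix a constant k > 0 and a function L : ℕ → ℕ with 1 ≤ L(M) ≤ M for all M, L(M) → ∞, and L(M)/√M → 0 as M → ∞. Then √(2·log(M−L(M))) − log L(M)/√(2·log(M−L(M))) − √(k·log M / L(M)) − √(2·log L(M)) → ∞ as M → ∞. -/
open Filter

private lemma sqrt_tendsto_atTop' : Tendsto Real.sqrt atTop atTop := by
  apply tendsto_atTop_atTop.mpr
  intro b
  refine ⟨(max b 0) ^ 2, fun a ha => le_trans (le_max_left b 0) ?_⟩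
  rw [← Real.sqrt_sq (le_max_right b 0)]
  exact Real.sqrt_le_sqrt ha

/-- Dominance comparison for part (a): if `L M → ∞` and `L M / √M → 0`,
then the asymptotic mean of the `L`-th largest of `M − L` standard Gaussians dominates the
asymptotic mean of the largest of the `L` signal Gaussians, with gap tending to `∞`. -/
theorem dominance_gap_part_a
    (k : ℝ) (hk : 0 < k)
    (L : ℕ → ℕ) (hL1 : ∀ M, 1 ≤ L M) (hLM : ∀ M, L M ≤ M)
    (hLinf : Tendsto (fun M => (L M : ℝ)) atTop atTop)
    (hLsqrt : Tendsto (fun M => (L M : ℝ) / Real.sqrt M) atTop (nhds 0)) :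
    Tendsto (fun M : ℕ =>
        Real.sqrt (2 * Real.log ((M : ℝ) - L M))
          - Real.log (L M) / Real.sqrt (2 * Real.log ((M : ℝ) - L M))
          - Real.sqrt (k * Real.log M / L M)
          - Real.sqrt (2 * Real.log (L M)))
      atTop atTop := by
  have hs2 : (0:ℝ) < Real.sqrt 2 := Real.sqrt_pos.mpr (by norm_num)
  have key2 : Real.sqrt 2 * Real.sqrt 2 = 2 := Real.mul_self_sqrt (by norm_num)
  set c : ℝ := 3 * Real.sqrt 2 / 4 - 1 with hcdef
  have hc : 0 < c := by
    rw [hcdef]; nlinarith [key2, hs2]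
  clear_value c
  -- the minorant
  have hf : Tendsto (fun M : ℕ => c / 2 * Real.sqrt (Real.log M - Real.log 2))
      atTop atTop := by
    apply Tendsto.const_mul_atTop (by positivity : (0:ℝ) < c / 2)
    apply sqrt_tendsto_atTop'.comp
    have hlog : Tendsto (fun M : ℕ => Real.log M) atTop atTop :=
      Real.tendsto_log_atTop.comp tendsto_natCast_atTop_atTop
    have := tendsto_atTop_add_const_right atTop (-Real.log 2) hlog
    simpa [sub_eq_add_neg] using this
  apply tendsto_atTop_mono' atTop _ hf
  -- the eventual inequality
  have e1 : ∀ᶠ M : ℕ in atTop, max 2 (8 * k / c ^ 2) ≤ (L M : ℝ) :=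
    hLinf.eventually_ge_atTop _
  have e2 : ∀ᶠ M : ℕ in atTop, (L M : ℝ) / Real.sqrt M < 1 / 2 :=
    hLsqrt.eventually_lt_const (by norm_num)
  have e3 : ∀ᶠ M : ℕ in atTop, (4:ℝ) ≤ (M : ℝ) := by
    filter_upwards [eventually_ge_atTop 4] with M hM
    exact_mod_cast hM
  filter_upwards [e1, e2, e3] with M h1 h2 h3
  set ℓ : ℝ := (L M : ℝ) with hℓdef
  clear_value ℓ
  have hℓ2 : (2:ℝ) ≤ ℓ := le_trans (le_max_left _ _) h1
  have hℓk : 8 * k / c ^ 2 ≤ ℓ := le_trans (le_max_right _ _) h1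
  have hℓpos : (0:ℝ) < ℓ := by linarith
  have hMpos : (0:ℝ) < (M:ℝ) := by linarith
  have hsMnn : 0 ≤ Real.sqrt M := Real.sqrt_nonneg _
  have hsMsq : Real.sqrt M * Real.sqrt M = (M:ℝ) := Real.mul_self_sqrt hMpos.le
  have hsM2 : (2:ℝ) ≤ Real.sqrt M := by nlinarith
  have hLle : ℓ ≤ Real.sqrt M / 2 := by
    have := (div_lt_iff₀ (by positivity : (0:ℝ) < Real.sqrt M)).mp h2
    linarith
  have hℓM4 : ℓ ≤ (M:ℝ) / 4 := by nlinarith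
  have hd : (M:ℝ) / 2 ≤ (M:ℝ) - ℓ := by linarith
  set a : ℝ := Real.log ((M:ℝ) - ℓ) with hadef
  clear_value a
  have hlog2 : 0 < Real.log 2 := Real.log_pos (by norm_num)
  have ha1 : Real.log M - Real.log 2 ≤ a := by
    have h := Real.log_le_log (by positivity : (0:ℝ) < (M:ℝ)/2) hd
    rw [hadef]
    rwa [Real.log_div (ne_of_gt hMpos) (by norm_num)] at h
  have hlogM : 2 * Real.log 2 ≤ Real.log M := by
    have h := Real.log_le_log (by norm_num : (0:ℝ) < 4) h3
    have h4 : Real.log 4 = 2 * Real.log 2 := by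
      rw [show (4:ℝ) = 2 ^ 2 by norm_num, Real.log_pow]; push_cast; ring
    linarith [h4 ▸ h]
  have hapos : 0 < a := by linarith
  set b : ℝ := Real.log ℓ with hbdef
  clear_value b
  have hb0 : 0 ≤ b := hbdef ▸ Real.log_nonneg (by linarith)
  have hb : b ≤ Real.log M / 2 - Real.log 2 := by
    have h := Real.log_le_log hℓpos hLle
    rw [hbdef]
    rwa [Real.log_div (by positivity) (by norm_num), Real.log_sqrt hMpos.le] at h
  have h2ba : 2 * b ≤ a := by linarith
  have hlogM2a : Real.log M ≤ 2 * a := by linarith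
  set sa : ℝ := Real.sqrt a with hsadef
  clear_value sa
  have hsapos : 0 < sa := hsadef ▸ Real.sqrt_pos.mpr hapos
  have hsasq : sa * sa = a := hsadef ▸ Real.mul_self_sqrt hapos.le
  have hsplit : Real.sqrt (2 * a) = Real.sqrt 2 * sa := hsadef ▸ Real.sqrt_mul (by norm_num) a
  -- term 2 bound
  have hT2 : b / (Real.sqrt 2 * sa) ≤ Real.sqrt 2 * sa / 4 := by
    rw [div_le_div_iff₀ (by positivity) (by norm_num)]
    nlinarith [key2, hsasq, h2ba]
  -- term 3 bound
  have hT3 : Real.sqrt (k * Real.log M / ℓ) ≤ c / 2 * sa := by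
    have harg : k * Real.log M / ℓ ≤ (c / 2) ^ 2 * a := by
      rw [div_le_iff₀ hℓpos]
      have h8 : 8 * k ≤ c ^ 2 * ℓ := by
        have := (div_le_iff₀ (by positivity : (0:ℝ) < c ^ 2)).mp hℓk
        linarith
      have hA : k * Real.log M ≤ k * (2 * a) :=
        mul_le_mul_of_nonneg_left hlogM2a hk.le
      have hB : 8 * k * a ≤ c ^ 2 * ℓ * a := mul_le_mul_of_nonneg_right h8 hapos.le
      have hgoal : (c / 2) ^ 2 * a * ℓ = c ^ 2 * ℓ * a / 4 := by ring
      rw [hgoal]; linarith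
    calc Real.sqrt (k * Real.log M / ℓ) ≤ Real.sqrt ((c / 2) ^ 2 * a) :=
          Real.sqrt_le_sqrt harg
      _ = c / 2 * sa := by
          rw [Real.sqrt_mul (sq_nonneg _), Real.sqrt_sq (by positivity : (0:ℝ) ≤ c / 2),
            hsadef]
  -- term 4 bound
  have hT4 : Real.sqrt (2 * b) ≤ sa := by
    calc Real.sqrt (2 * b) ≤ Real.sqrt a := Real.sqrt_le_sqrt (by linarith)
      _ = sa := hsadef.symm
  -- minorant bound
  have hF : Real.sqrt (Real.log M - Real.log 2) ≤ sa := hsadef ▸ Real.sqrt_le_sqrt ha1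
  have hFc : c / 2 * Real.sqrt (Real.log M - Real.log 2) ≤ c / 2 * sa :=
    mul_le_mul_of_nonneg_left hF (by positivity)
  have hbal : c / 2 * sa + c / 2 * sa + Real.sqrt 2 * sa / 4 + sa = Real.sqrt 2 * sa := by
    rw [hcdef]; ring
  show c / 2 * Real.sqrt (Real.log M - Real.log 2) ≤
      Real.sqrt (2 * a) - b / Real.sqrt (2 * a) - Real.sqrt (k * Real.log M / ℓ)
        - Real.sqrt (2 * b)
  rw [hsplit]
  linarith [hT2, hT3, hT4, hFc, hbal]
end

section
/- Fix a constant k > 0 and a function L : ℕ → ℕ with 1 ≤ L(M) ≤ M for all M, L(M) → ∞, and L(M)/M → 0 as M → ∞. Then √(2·log(M−L(M))) − √(k·log M / L(M)) − √(log L(M) / 2) → ∞ as M → ∞. -/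
/-!
Write `s = √(log M)`. Since `L = o(M)`, eventually `M ≤ (M - L)²`, so the first term is at least
`s`; since `L → ∞`, eventually `L ≥ 100 k`, so the second term is at most `s / 10`; and `L ≤ M`
bounds the third term by `s / √2`. Hence the gap is eventually at least
`s (1 - 1/10 - 1/√2) ≥ s / 10 → ∞`.
-/

open Filter Real

lemma eventually_le_mul_of_tendsto_div_natCast_zero {f : ℕ → ℝ}
    (hf : Tendsto (fun n => f n / n) atTop (nhds 0)) {c : ℝ} (hc : 0 < c) :
    ∀ᶠ n : ℕ in atTop, f n ≤ c * n := by
  filter_upwards [hf.eventually (eventually_le_nhds hc), eventually_gt_atTop 0] with n hn hn0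
  rwa [div_le_iff₀ (by exact_mod_cast hn0)] at hn

lemma le_sq_sub_of_two_mul_le {m l : ℝ} (hm : 4 ≤ m) (hl : 2 * l ≤ m) : m ≤ (m - l) ^ 2 := by
  nlinarith

lemma log_le_two_mul_log_of_le_sq {x y : ℝ} (hx : 0 < x) (h : x ≤ y ^ 2) :
    log x ≤ 2 * log y := by
  simpa only [log_pow, Nat.cast_ofNat] using log_le_log hx h

lemma mul_div_le_div_of_mul_le {k x c l : ℝ} (hx : 0 ≤ x) (hc : 0 < c) (hl : 0 < l)
    (h : c * k ≤ l) : k * x / l ≤ x / c := by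
  rw [div_le_div_iff₀ hl hc]
  nlinarith

lemma sqrt_div_ten_le_sqrt_sub_sqrt_div_sub_sqrt_div (x : ℝ) :
    √x / 10 ≤ √x - √(x / 100) - √(x / 2) := by
  have hsqrt100 : √(100 : ℝ) = 10 := by
    rw [show (100 : ℝ) = 10 ^ 2 by norm_num, sqrt_sq (by norm_num)]
  have hsqrt2 : 5 / 4 < √(2 : ℝ) := by
    rw [lt_sqrt (by norm_num)]
    norm_num
  have hx := sqrt_nonneg x
  have hhalf : √x / √2 ≤ 4 / 5 * √x := by
    rw [div_le_iff₀ (by positivity)]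
    nlinarith
  rw [sqrt_div' x (by norm_num), sqrt_div' x (by norm_num), hsqrt100]
  linarith

theorem dominance_gap_part_b_general
    (k : ℝ)
    (L : ℕ → ℕ)
    (hLinf : Tendsto (fun M => (L M : ℝ)) atTop atTop)
    (hLlin : Tendsto (fun M => (L M : ℝ) / M) atTop (nhds 0)) :
    Tendsto (fun M : ℕ =>
        Real.sqrt (2 * Real.log ((M : ℝ) - L M))
          - Real.sqrt (k * Real.log M / L M)
          - Real.sqrt (Real.log (L M) / 2))
      atTop atTop := by
  have hs : Tendsto (fun M : ℕ => √(log M) / 10) atTop atTop :=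
    (tendsto_sqrt_atTop.comp (tendsto_log_atTop.comp tendsto_natCast_atTop_atTop)).atTop_div_const
      (by norm_num)
  refine tendsto_atTop_mono' atTop ?_ hs
  filter_upwards [eventually_le_mul_of_tendsto_div_natCast_zero hLlin (c := 1 / 2) (by norm_num),
    hLinf.eventually_ge_atTop 1, hLinf.eventually_ge_atTop (100 * k), eventually_ge_atTop 4]
    with M hLhalf hL1 hLk hM4
  have hM : (4 : ℝ) ≤ M := by exact_mod_cast hM4
  calc √(log M) / 10 ≤ √(log M) - √(log M / 100) - √(log M / 2) :=
        sqrt_div_ten_le_sqrt_sub_sqrt_div_sub_sqrt_div _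
    _ ≤ _ := by
      gcongr ?_ - ?_ - ?_ <;> apply sqrt_le_sqrt
      · exact log_le_two_mul_log_of_le_sq (by positivity) (le_sq_sub_of_two_mul_le hM (by linarith))
      · exact mul_div_le_div_of_mul_le (log_nonneg (by linarith)) (by norm_num) (by linarith) hLk
      · gcongr
        exact_mod_cast (by linarith : (L M : ℝ) ≤ M)

/-- Dominance comparison for part (b): if `L M → ∞` and `L M / M → 0`,
then the asymptotic mean of the largest of `M − L` standard Gaussians dominates the
asymptotic mean of the smallest of the `L` signal Gaussians, with gap tending to `∞`. -/
theorem dominance_gap_part_b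
    (k : ℝ) (hk : 0 < k)
    (L : ℕ → ℕ) (hL1 : ∀ M, 1 ≤ L M) (hLM : ∀ M, L M ≤ M)
    (hLinf : Tendsto (fun M => (L M : ℝ)) atTop atTop)
    (hLlin : Tendsto (fun M => (L M : ℝ) / M) atTop (nhds 0)) :
    Tendsto (fun M : ℕ =>
        Real.sqrt (2 * Real.log ((M : ℝ) - L M))
          - Real.sqrt (k * Real.log M / L M)
          - Real.sqrt (Real.log (L M) / 2))
      atTop atTop :=
  dominance_gap_part_b_general k L hLinf hLlin
end
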